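/- Let q ≠ 0, q ≠ 3, q ≠ -3, and k be a real number with k^q = q³ Γ(1 - α/q) / (3(3-q)(3+q) Γ(1 - α/q - α)) for some 0 < α < 1. Then the function u(t,x) = k t^{-α/q} x^{3/q} satisfies the spatial identity ∂_x( u^q ∂_x² u ) (t,x) = (Γ(1 - α/q)/Γ(1 - α/q - α)) · k · t^{-α/q - α} · x^{3/q} for all t, x > 0. -/

import Mathlib

open Real

lemma my_mul_rpow (a : ℝ) {b : ℝ} (hb : 0 < b) {q : ℝ} (hq : q ≠ 0) :
    (a * b) ^ q = a ^ q * b ^ q := by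
  rcases lt_trichotomy a 0 with ha | ha | ha
  · rw [Real.rpow_def_of_neg (mul_neg_of_neg_of_pos ha hb), Real.rpow_def_of_neg ha,
      Real.rpow_def_of_pos hb, Real.log_mul ha.ne hb.ne', add_mul, Real.exp_add]
    ring
  · simp [ha, Real.zero_rpow hq]
  · rw [Real.mul_rpow ha.le hb.le]

/-- Spatial identity for the invariant solution `u(t,x) = k t^(-α/q) x^(3/q)` of the
third-order fractional PDE: `∂_x(u^q ∂_x² u) = (Γ(1-α/q)/Γ(1-α/q-α)) k t^(-α/q-α) x^(3/q)`. -/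
theorem flux_identity_third_order (α q k : ℝ)
    (hα0 : 0 < α) (hα1 : α < 1) (hq : q ≠ 0) (hq3 : q ≠ 3) (hq3' : q ≠ -3)
    (hkq : k ^ q = q ^ 3 * Real.Gamma (1 - α / q) /
      (3 * (3 - q) * (3 + q) * Real.Gamma (1 - α / q - α)))
    (u : ℝ → ℝ → ℝ) (hu : ∀ t x, u t x = k * t ^ (-(α / q)) * x ^ (3 / q)) :
    ∀ t x : ℝ, 0 < t → 0 < x →
      deriv (fun y : ℝ => (u t y) ^ q * deriv (deriv (fun z : ℝ => u t z)) y) x =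
        (Real.Gamma (1 - α / q) / Real.Gamma (1 - α / q - α)) * k *
          t ^ (-(α / q) - α) * x ^ (3 / q) := by
  intro t x ht hx
  set c : ℝ := k * t ^ (-(α / q)) with hc
  have hfu : (fun z : ℝ => u t z) = fun z : ℝ => c * z ^ (3 / q) := by
    funext z; rw [hu]
  -- first derivative at positive points
  have hd1 : ∀ y : ℝ, 0 < y →
      deriv (fun z : ℝ => u t z) y = c * (3 / q) * y ^ (3 / q - 1) := by
    intro y hy
    rw [hfu]
    have h := ((Real.hasDerivAt_rpow_const (x := y) (p := 3 / q) (Or.inl hy.ne'))).const_mul c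
    rw [h.deriv]; ring
  -- second derivative at positive points
  have hd2 : ∀ y : ℝ, 0 < y →
      deriv (deriv (fun z : ℝ => u t z)) y
        = c * (3 / q) * ((3 / q - 1) * y ^ (3 / q - 2)) := by
    intro y hy
    have hev : deriv (fun z : ℝ => u t z) =ᶠ[nhds y]
        fun z : ℝ => c * (3 / q) * z ^ (3 / q - 1) := by
      filter_upwards [eventually_gt_nhds hy] with z hz using hd1 z hz
    rw [hev.deriv_eq]
    have h := ((Real.hasDerivAt_rpow_const (x := y) (p := 3 / q - 1)
      (Or.inl hy.ne'))).const_mul (c * (3 / q))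
    rw [h.deriv]
    have h2 : 3 / q - 1 - 1 = 3 / q - 2 := by ring
    rw [h2]
  -- the integrand equals C * y ^ (3/q + 1) near x
  have hev : (fun y : ℝ => (u t y) ^ q * deriv (deriv (fun z : ℝ => u t z)) y)
      =ᶠ[nhds x] fun y : ℝ =>
        c ^ q * c * (3 / q) * (3 / q - 1) * y ^ (3 / q + 1) := by
    filter_upwards [eventually_gt_nhds hx] with y hy
    have h3 : y ^ (3 : ℝ) * y ^ (3 / q - 2) = y ^ (3 / q + 1) := by
      rw [← Real.rpow_add hy]; ring_nf
    rw [hu, hd2 y hy, my_mul_rpow c (Real.rpow_pos_of_pos hy _) hq,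
      ← Real.rpow_mul hy.le, div_mul_cancel₀ (3 : ℝ) hq]
    linear_combination (c ^ q * c * (3 / q) * (3 / q - 1)) * h3
  rw [hev.deriv_eq]
  have h := ((Real.hasDerivAt_rpow_const (x := x) (p := 3 / q + 1)
    (Or.inl hx.ne'))).const_mul (c ^ q * c * (3 / q) * (3 / q - 1))
  rw [h.deriv]
  have hexp : 3 / q + 1 - 1 = 3 / q := by ring
  rw [hexp]
  -- now a purely algebraic identity
  have hT : (0 : ℝ) < t ^ (-(α / q)) := Real.rpow_pos_of_pos ht _
  have hcq : c ^ q = k ^ q * t ^ (-α : ℝ) := by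
    rw [hc, my_mul_rpow k hT hq, ← Real.rpow_mul ht.le,
      show -(α / q) * q = -α by field_simp]
  have htt : t ^ (-(α / q)) * t ^ (-α : ℝ) = t ^ (-(α / q) - α) := by
    rw [← Real.rpow_add ht]; ring_nf
  have h3q : (3 : ℝ) - q ≠ 0 := sub_ne_zero.mpr (Ne.symm hq3)
  have h3q' : (3 : ℝ) + q ≠ 0 := by
    intro h; apply hq3'; linarith
  have hkey : k ^ q * (3 / q * (3 / q - 1) * (3 / q + 1)) =
      Real.Gamma (1 - α / q) / Real.Gamma (1 - α / q - α) := by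
    set G1 := Real.Gamma (1 - α / q) with hG1
    set G2 := Real.Gamma (1 - α / q - α) with hG2
    by_cases hΓ : G2 = 0
    · rw [hΓ] at hkq ⊢
      simp only [mul_zero, div_zero] at hkq ⊢
      rw [hkq]; ring
    · rw [hkq]; field_simp
  rw [hc, hcq]
  linear_combination (k * t ^ (-(α / q) - α) * x ^ (3 / q)) * hkey +
    (k ^ q * (3 / q * (3 / q - 1) * (3 / q + 1)) * k * x ^ (3 / q)) * htt
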